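/- arXiv:math/0611159 — 5 statements merged into one kernel-verified Lean document; each statement's English description precedes it below -/
import Mathlib

section
/- The logarithmic Mahler measure of P(x,y) = −2y² + 2xy + 6y + 2x + 1 equals log(3 + √11). -/
open Complex Real MeasureTheory

/-- The dilogarithm `Li₂(z) = -∫₀¹ log(1 - z t)/t dt`. -/
noncomputable def Li2 (z : ℂ) : ℂ := -∫ t in (0:ℝ)..1, Complex.log (1 - z * t) / t

/-- The Bloch–Wigner dilogarithm `D(z) = Im(Li₂ z) + log|z| · arg(1 - z)`. -/
noncomputable def BW (z : ℂ) : ℝ := (Li2 z).im + Real.log ‖z‖ * Complex.arg (1 - z)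
/-- The logarithmic Mahler measure of a two-variable polynomial function:
`m(P) = (1/(2π)²) ∫₀^{2π} ∫₀^{2π} log|P(e^{iθ}, e^{iφ})| dθ dφ`. -/
noncomputable def mahler2 (P : ℂ → ℂ → ℂ) : ℝ :=
  (1 / (2 * Real.pi)^2) *
    ∫ θ in (0:ℝ)..(2 * Real.pi), ∫ φ in (0:ℝ)..(2 * Real.pi),
      Real.log ‖P (Complex.exp (θ * Complex.I)) (Complex.exp (φ * Complex.I))‖

/-!
For `|y| = 1` the polynomial is affine in `x`, namely `a(y) + b(y) x` with `a(y) = -2y² + 6y + 1`,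
`b(y) = 2y + 2` and `|b(y)| < |a(y)|`. After swapping the two integrations (the integrand is
continuous on the torus, since `P` has no zeros there), Jensen's formula turns the average over
`|x| = 1` into `log |a(y)|`, so `m(P) = m(a)`. Finally `a = -2 (y - r)(y - s)` with
`r = (3 + √11)/2` outside and `s = (3 - √11)/2` inside the unit disc, so
`m(a) = log 2 + log r = log (3 + √11)`.
-/

open Polynomial

theorem add_mul_ne_zero_of_norm_lt {R : Type*} [SeminormedRing R] {a b x : R}
    (h : ‖b‖ < ‖a‖) (hx : ‖x‖ ≤ 1) : a + b * x ≠ 0 := by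
  intro h0
  have hab : ‖a‖ ≤ ‖b‖ := calc
    ‖a‖ = ‖b * x‖ := by rw [eq_neg_of_add_eq_zero_left h0, norm_neg]
    _ ≤ ‖b‖ * ‖x‖ := norm_mul_le b x
    _ ≤ ‖b‖ := mul_le_of_le_one_right (norm_nonneg b) hx
  exact hab.not_gt h

theorem circleAverage_log_norm_add_mul {a b : ℂ} (h : ‖b‖ < ‖a‖) :
    circleAverage (fun x ↦ Real.log ‖a + b * x‖) 0 1 = Real.log ‖a‖ := by
  have hg : AnalyticOnNhd ℂ (fun x ↦ a + b * x) (Metric.closedBall 0 |1|) :=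
    analyticOnNhd_const.add (analyticOnNhd_const.mul analyticOnNhd_id)
  simpa using AnalyticOnNhd.circleAverage_log_norm_of_ne_zero hg fun u hu ↦
    add_mul_ne_zero_of_norm_lt h (by simpa using hu)

theorem mahler2_eq_circleAverage_circleAverage {P : ℂ → ℂ → ℂ}
    (hP : Continuous (Function.uncurry P)) (hne : ∀ x y, ‖x‖ = 1 → ‖y‖ = 1 → P x y ≠ 0) :
    mahler2 P = circleAverage (fun y ↦ circleAverage (fun x ↦ Real.log ‖P x y‖) 0 1) 0 1 := by
  set F : ℝ → ℝ → ℝ := fun θ φ ↦ Real.log ‖P (exp (θ * I)) (exp (φ * I))‖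
  have hF : Continuous (Function.uncurry F) :=
    (continuous_norm.comp (hP.comp (f := fun p : ℝ × ℝ ↦ (exp (p.1 * I), exp (p.2 * I)))
      (by fun_prop))).log fun p ↦ norm_ne_zero_iff.mpr
      (hne _ _ (norm_exp_ofReal_mul_I _) (norm_exp_ofReal_mul_I _))
  have hswap : ∫ θ in (0 : ℝ)..2 * π, ∫ φ in (0 : ℝ)..2 * π, F θ φ
      = ∫ φ in (0 : ℝ)..2 * π, ∫ θ in (0 : ℝ)..2 * π, F θ φ :=
    intervalIntegral_intervalIntegral_swap <|
      (hF.continuousOn.integrableOn_compact (isCompact_uIcc.prod isCompact_uIcc)).mono_set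
        (Set.prod_mono Set.uIoc_subset_uIcc Set.uIoc_subset_uIcc)
  simp only [mahler2, circleAverage_def, circleMap, zero_add, ofReal_one, one_mul, smul_eq_mul,
    intervalIntegral.integral_const_mul]
  rw [hswap]
  ring

theorem norm_two_mul_add_two_lt {y : ℂ} (hy : ‖y‖ = 1) :
    ‖2 * y + 2‖ < ‖-2 * y ^ 2 + 6 * y + 1‖ := by
  have h1 : y.re * y.re + y.im * y.im = 1 := by
    simpa [hy, Complex.normSq_apply] using (Complex.sq_norm y).symm
  apply lt_of_pow_lt_pow_left₀ 2 (norm_nonneg _)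
  rw [Complex.sq_norm, Complex.sq_norm]
  -- with `c = Re y`, the difference of the squared norms is `37 - 20c - 8c² ≥ 9`
  simp only [Complex.normSq_apply, Complex.add_re, Complex.add_im,
    Complex.mul_re, Complex.mul_im, Complex.neg_re, Complex.neg_im, Complex.one_re,
    Complex.one_im, Complex.re_ofNat, Complex.im_ofNat, sq]
  nlinarith [sq_nonneg (1 - y.re)]

theorem circleAverage_log_norm_quadratic :
    circleAverage (fun y ↦ Real.log ‖-2 * y ^ 2 + 6 * y + 1‖) 0 1 = Real.log (3 + √11) := by
  have h11 : √11 ^ 2 = 11 := Real.sq_sqrt (by norm_num)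
  have h3 : 3 < √11 := by nlinarith [Real.sqrt_nonneg 11]
  have h4 : √11 < 4 := by nlinarith [Real.sqrt_nonneg 11]
  obtain ⟨r, hr⟩ : ∃ r : ℝ, r = (3 + √11) / 2 := ⟨_, rfl⟩
  obtain ⟨s, hs⟩ : ∃ s : ℝ, s = (3 - √11) / 2 := ⟨_, rfl⟩
  have hfac : ∀ y : ℂ,
      -2 * y ^ 2 + 6 * y + 1 = eval y (C (-2) * ((X - C (r : ℂ)) * (X - C (s : ℂ)))) := by
    intro y
    simp only [eval_mul, eval_C, eval_sub, eval_X, hr, hs]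
    push_cast
    linear_combination (-1/2 : ℂ) * (by exact_mod_cast h11 : ((√11 : ℝ) : ℂ) ^ 2 = 11)
  have hr1 : 1 ≤ |r| := by rw [abs_of_pos (by linarith)]; linarith
  have hs1 : |s| ≤ 1 := abs_le.mpr ⟨by linarith, by linarith⟩
  have hroots : (X - C (r : ℂ)) * (X - C (s : ℂ)) ≠ 0 :=
    mul_ne_zero (X_sub_C_ne_zero _) (X_sub_C_ne_zero _)
  simp only [hfac]
  rw [← logMahlerMeasure_def, logMahlerMeasure_C_mul (by norm_num) hroots,
    logMahlerMeasure_mul_eq_add_logMahlerMeasure hroots, logMahlerMeasure_X_sub_C,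
    logMahlerMeasure_X_sub_C]
  simp only [Complex.norm_real, Real.norm_eq_abs, posLog_abs]
  rw [posLog_eq_log hr1, (posLog_eq_zero_iff s).mpr hs1, add_zero,
    ← Real.log_mul (by norm_num) (by linarith)]
  norm_num [hr, mul_div_cancel₀]

theorem stmt_9 :
    mahler2 (fun x y => -2 * y^2 + 2 * x * y + 6 * y + 2 * x + 1)
      = Real.log (3 + Real.sqrt 11) := by
  have hsplit : ∀ x y : ℂ,
      -2 * y^2 + 2 * x * y + 6 * y + 2 * x + 1 = (-2 * y^2 + 6 * y + 1) + (2 * y + 2) * x :=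
    fun x y ↦ by ring
  simp_rw [hsplit]
  calc _ = circleAverage (fun y ↦ circleAverage
          (fun x ↦ Real.log ‖(-2 * y^2 + 6 * y + 1) + (2 * y + 2) * x‖) 0 1) 0 1 :=
        mahler2_eq_circleAverage_circleAverage (by fun_prop) fun x y hx hy ↦
          add_mul_ne_zero_of_norm_lt (norm_two_mul_add_two_lt hy) hx.le
    _ = circleAverage (fun y ↦ Real.log ‖-2 * y ^ 2 + 6 * y + 1‖) 0 1 :=
        circleAverage_congr_sphere fun y hy ↦
          circleAverage_log_norm_add_mul (norm_two_mul_add_two_lt (by simpa using hy))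
    _ = _ := circleAverage_log_norm_quadratic
end

section
/- Let P(x,y) = x + y − 4xy + x²y + xy². Then f(t) = ((t−1)(t−i))/((t+1)(t+i)) and g(t) = ((t−1)(t+i))/((t+1)(t−i)) satisfy P(f(t), g(t)) = 0 identically as rational functions of t. -/
/-! With `x y` the two coordinates, `P = (x + y)(1 + xy) - 4xy`. The conjugate factors `t ∓ i`
cancel in the product, so `xy = u²` with `u = (t - 1)/(t + 1)`, while
`x + y = 2(t - 1)²/(t² + 1) = 4u²/(1 + u²)`; hence `P` vanishes. -/

section

variable {K : Type*} [Field K] {i t : K}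

theorem sq_add_one_eq_mul (hi : i ^ 2 = -1) (t : K) : t ^ 2 + 1 = (t + i) * (t - i) := by
  linear_combination hi

theorem parametrization_mul (h₁ : t + 1 ≠ 0) (hp : t + i ≠ 0) (hm : t - i ≠ 0) :
    (t - 1) * (t - i) / ((t + 1) * (t + i)) * ((t - 1) * (t + i) / ((t + 1) * (t - i)))
      = ((t - 1) / (t + 1)) ^ 2 := by
  field_simp

theorem parametrization_add (hi : i ^ 2 = -1) (h₁ : t + 1 ≠ 0) (hp : t + i ≠ 0)
    (hm : t - i ≠ 0) :
    (t - 1) * (t - i) / ((t + 1) * (t + i)) + (t - 1) * (t + i) / ((t + 1) * (t - i))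
      = 2 * (t - 1) ^ 2 / (t ^ 2 + 1) := by
  rw [sq_add_one_eq_mul hi]
  field_simp
  linear_combination 2 * (t - 1) * hi

theorem parametrization_isRoot (hi : i ^ 2 = -1) (h₁ : t + 1 ≠ 0) (hp : t + i ≠ 0)
    (hm : t - i ≠ 0) (x y : K) (hx : x = (t - 1) * (t - i) / ((t + 1) * (t + i)))
    (hy : y = (t - 1) * (t + i) / ((t + 1) * (t - i))) :
    x + y - 4 * x * y + x ^ 2 * y + x * y ^ 2 = 0 := by
  have hxy : x * y = ((t - 1) / (t + 1)) ^ 2 := hx ▸ hy ▸ parametrization_mul h₁ hp hm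
  have hsum : x + y = 2 * (t - 1) ^ 2 / (t ^ 2 + 1) :=
    hx ▸ hy ▸ parametrization_add hi h₁ hp hm
  have hne : t ^ 2 + 1 ≠ 0 := sq_add_one_eq_mul hi t ▸ mul_ne_zero hp hm
  calc x + y - 4 * x * y + x ^ 2 * y + x * y ^ 2 = (x + y) * (1 + x * y) - 4 * (x * y) := by ring
    _ = 0 := by
      rw [hsum, hxy]
      field_simp
      ring

end

theorem stmt_12 (P : ℂ → ℂ → ℂ)
    (hP : ∀ x y : ℂ, P x y = x + y - 4 * x * y + x^2 * y + x * y^2) :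
    ∀ t : ℂ, t + 1 ≠ 0 → t + Complex.I ≠ 0 → t - Complex.I ≠ 0 →
      P (((t - 1) * (t - Complex.I)) / ((t + 1) * (t + Complex.I)))
        (((t - 1) * (t + Complex.I)) / ((t + 1) * (t - Complex.I))) = 0 := by
  intro t h₁ hp hm
  rw [hP]
  exact parametrization_isRoot Complex.I_sq h₁ hp hm _ _ rfl rfl
end

section
/- The logarithmic Mahler measure of P(x,y) = x + y − 4xy + x²y + xy² satisfies π·m(P) = 4·D(i), where D is the Bloch–Wigner dilogarithm and i the imaginary unit. -/
open Complex Real MeasureTheory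

/-!
On the torus `P = xy (x + x⁻¹ + y + y⁻¹ - 4)`, so that
`|P(e^{iθ}, e^{iφ})| = 4 - 2 cos θ - 2 cos φ`. Writing `4 - 2 cos θ = 2 cosh a` with
`a = 2 arsinh (sin (θ/2))`, Jensen's formula gives `∫ log (2 cosh a - 2 cos φ) dφ = 2π |a|`,
hence `π m(P) = 4 ∫₀^{π/2} arsinh (sin u) du`. Expanding `arsinh s = ∫₀¹ s / √(1 + s²t²) dt`
and swapping the integrals turns this into `4 ∫₀¹ arctan t / t dt`, which is
`4 Im Li₂(i) = 4 D(i)` because `arg (1 - it) = -arctan t`.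
-/

open Set

lemma norm_exp_mul_I_sub_ofReal_sq (c φ : ℝ) :
    ‖Complex.exp (φ * I) - c‖ ^ 2 = 1 - 2 * c * Real.cos φ + c ^ 2 := by
  rw [Complex.sq_norm, Complex.normSq_apply]
  simp only [sub_re, sub_im, ofReal_re, ofReal_im, exp_ofReal_mul_I_re, exp_ofReal_mul_I_im]
  linear_combination Real.sin_sq_add_cos_sq φ

lemma log_two_cosh_sub_two_cos (x φ : ℝ) :
    Real.log (2 * Real.cosh x - 2 * Real.cos φ)
      = 2 * Real.log ‖Complex.exp (φ * I) - Real.exp x‖ - x := by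
  have key : 2 * Real.cosh x - 2 * Real.cos φ
      = Real.exp (-x) * ‖Complex.exp (φ * I) - Real.exp x‖ ^ 2 := by
    rw [norm_exp_mul_I_sub_ofReal_sq, Real.cosh_eq, Real.exp_neg]
    field_simp
    ring
  rcases eq_or_ne ‖Complex.exp (φ * I) - Real.exp x‖ 0 with h | h
  · -- `e^{iφ} = e^x` forces `x = 0`, and then both sides are `log 0 = 0`
    have hx : x = 0 := by
      have := congrArg norm (sub_eq_zero.mp (norm_eq_zero.mp h))
      rw [norm_exp_ofReal_mul_I, norm_real, Real.norm_of_nonneg (Real.exp_pos x).le] at this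
      exact Real.exp_eq_one_iff x |>.mp this.symm
    rw [key, h, hx]
    simp
  · rw [key, Real.log_mul (Real.exp_pos _).ne' (pow_ne_zero 2 h), Real.log_exp, Real.log_pow]
    push_cast
    ring

theorem integral_log_two_cosh_sub_two_cos (x : ℝ) :
    ∫ φ in (0:ℝ)..2 * π, Real.log (2 * Real.cosh x - 2 * Real.cos φ) = 2 * π * |x| := by
  have hint : IntervalIntegrable (fun φ : ℝ => Real.log ‖Complex.exp (φ * I) - Real.exp x‖)
      volume 0 (2 * π) := by
    simpa [CircleIntegrable, circleMap_zero] using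
      circleIntegrable_log_norm_sub_const (a := (Real.exp x : ℂ)) (c := 0) 1
  have havg : ∫ φ in (0:ℝ)..2 * π, Real.log ‖Complex.exp (φ * I) - Real.exp x‖
      = 2 * π * max 0 x := by
    have := circleAverage_log_norm_sub_const_eq_posLog (a := (Real.exp x : ℂ))
    rw [circleAverage_def] at this
    simp only [circleMap_zero, ofReal_one, one_mul, smul_eq_mul, norm_real,
      Real.norm_of_nonneg (Real.exp_pos x).le, posLog_eq_log_max_one (Real.exp_pos x).le] at this
    rw [← Real.exp_zero, ← Real.exp_monotone.map_max, Real.log_exp] at this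
    rw [← this, ← mul_assoc, mul_inv_cancel₀ (by positivity), one_mul]
  simp_rw [log_two_cosh_sub_two_cos]
  rw [intervalIntegral.integral_sub (hint.const_mul 2) intervalIntegrable_const,
    intervalIntegral.integral_const_mul, havg, intervalIntegral.integral_const]
  rcases le_total 0 x with h | h <;> simp [h, abs_of_nonneg, abs_of_nonpos]; ring

def P₄ (x y : ℂ) : ℂ := x + y - 4 * x * y + x ^ 2 * y + x * y ^ 2

lemma P₄_exp_mul_I (θ φ : ℝ) :
    P₄ (Complex.exp (θ * I)) (Complex.exp (φ * I))
      = Complex.exp (θ * I) * Complex.exp (φ * I)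
        * ((2 * Real.cos θ + 2 * Real.cos φ - 4 : ℝ) : ℂ) := by
  have inv_mul (t : ℝ) : Complex.exp (-t * I) * Complex.exp (t * I) = 1 := by
    rw [← Complex.exp_add, neg_mul, neg_add_cancel, Complex.exp_zero]
  push_cast
  rw [two_cos, two_cos, P₄]
  linear_combination -Complex.exp (φ * I) * inv_mul θ - Complex.exp (θ * I) * inv_mul φ

lemma norm_P₄_exp_mul_I (θ φ : ℝ) :
    ‖P₄ (Complex.exp (θ * I)) (Complex.exp (φ * I))‖
      = 4 - 2 * Real.cos θ - 2 * Real.cos φ := by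
  rw [P₄_exp_mul_I, norm_mul, norm_mul, norm_exp_ofReal_mul_I, norm_exp_ofReal_mul_I, norm_real,
    Real.norm_eq_abs, abs_of_nonpos (by linarith [Real.cos_le_one θ, Real.cos_le_one φ])]
  ring

lemma four_sub_two_cos_eq_two_cosh (θ : ℝ) :
    4 - 2 * Real.cos θ = 2 * Real.cosh (2 * Real.arsinh (Real.sin (θ / 2))) := by
  obtain ⟨t, rfl⟩ : ∃ t, θ = 2 * t := ⟨θ / 2, by ring⟩
  rw [mul_div_cancel_left₀ t two_ne_zero, Real.cosh_two_mul, Real.cosh_sq, Real.sinh_arsinh,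
    Real.cos_two_mul']
  linear_combination -2 * Real.sin_sq_add_cos_sq t

lemma integral_log_norm_P₄ (θ : ℝ) :
    ∫ φ in (0:ℝ)..2 * π, Real.log ‖P₄ (Complex.exp (θ * I)) (Complex.exp (φ * I))‖
      = 4 * π * |Real.arsinh (Real.sin (θ / 2))| := by
  simp_rw [norm_P₄_exp_mul_I, four_sub_two_cos_eq_two_cosh]
  rw [integral_log_two_cosh_sub_two_cos, abs_mul, abs_two]
  ring

lemma pi_mul_mahler2_P₄ :
    π * mahler2 P₄ = ∫ θ in (0:ℝ)..2 * π, |Real.arsinh (Real.sin (θ / 2))| := by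
  simp_rw [mahler2, integral_log_norm_P₄, intervalIntegral.integral_const_mul]
  field_simp
  ring

lemma integral_comp_sin_zero_pi {f : ℝ → ℝ} (hf : Continuous f) :
    ∫ u in (0:ℝ)..π, f (Real.sin u) = 2 * ∫ u in (0:ℝ)..π / 2, f (Real.sin u) := by
  have hint (a b : ℝ) : IntervalIntegrable (fun u => f (Real.sin u)) volume a b :=
    (hf.comp Real.continuous_sin).intervalIntegrable a b
  have reflect :
      ∫ u in π / 2..π, f (Real.sin u) = ∫ u in (0:ℝ)..π / 2, f (Real.sin u) := by
    simpa [Real.sin_pi_sub, sub_half] using (intervalIntegral.integral_comp_sub_left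
      (fun u => f (Real.sin u)) π (a := 0) (b := π / 2)).symm
  rw [← intervalIntegral.integral_add_adjacent_intervals (hint 0 (π / 2)) (hint _ _), reflect]
  ring

lemma integral_abs_arsinh_sin_half :
    ∫ θ in (0:ℝ)..2 * π, |Real.arsinh (Real.sin (θ / 2))|
      = 4 * ∫ u in (0:ℝ)..π / 2, Real.arsinh (Real.sin u) := by
  have nonneg : ∫ u in (0:ℝ)..π / 2, |Real.arsinh (Real.sin u)|
      = ∫ u in (0:ℝ)..π / 2, Real.arsinh (Real.sin u) := by
    refine intervalIntegral.integral_congr fun u hu => abs_of_nonneg ?_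
    rw [uIcc_of_le (by positivity)] at hu
    exact Real.arsinh_nonneg_iff.mpr
      (Real.sin_nonneg_of_nonneg_of_le_pi hu.1 (by linarith [hu.2, Real.pi_pos]))
  rw [intervalIntegral.integral_comp_div (fun u => |Real.arsinh (Real.sin u)|) two_ne_zero,
    zero_div, mul_div_cancel_left₀ _ two_ne_zero,
    integral_comp_sin_zero_pi (Real.continuous_arsinh.abs), nonneg, smul_eq_mul]
  ring

lemma integral_div_sqrt_one_add_sq_mul_sq (s : ℝ) :
    ∫ t in (0:ℝ)..1, s / √(1 + s ^ 2 * t ^ 2) = Real.arsinh s := by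
  have deriv (t : ℝ) :
      HasDerivAt (fun t => Real.arsinh (s * t)) (s / √(1 + s ^ 2 * t ^ 2)) t := by
    refine ((Real.hasDerivAt_arsinh (s * t)).comp t
      ((hasDerivAt_id t).const_mul s)).congr_deriv ?_
    rw [mul_pow, mul_one, inv_mul_eq_div]
  have cont : Continuous fun t : ℝ => s / √(1 + s ^ 2 * t ^ 2) :=
    continuous_const.div (by fun_prop) fun t => (Real.sqrt_pos.mpr (by positivity)).ne'
  rw [intervalIntegral.integral_eq_sub_of_hasDerivAt (fun t _ => deriv t)
    (cont.intervalIntegrable 0 1)]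
  simp

lemma hasDerivAt_arcsin_mul_cos_div (t u : ℝ) :
    HasDerivAt (fun u => Real.arcsin (t * Real.cos u / √(1 + t ^ 2)))
      (-(t * Real.sin u) / √(1 + t ^ 2 * Real.sin u ^ 2)) u := by
  have hA : 0 < √(1 + t ^ 2) := Real.sqrt_pos.mpr (by positivity)
  have hA2 : √(1 + t ^ 2) ^ 2 = 1 + t ^ 2 := Real.sq_sqrt (by positivity)
  have hsq : 1 - (t * Real.cos u / √(1 + t ^ 2)) ^ 2
      = (1 + t ^ 2 * Real.sin u ^ 2) / √(1 + t ^ 2) ^ 2 := by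
    field_simp
    linear_combination hA2 - t ^ 2 * Real.sin_sq_add_cos_sq u
  have hlt : (t * Real.cos u / √(1 + t ^ 2)) ^ 2 < 1 := by
    have : 0 < (1 + t ^ 2 * Real.sin u ^ 2) / √(1 + t ^ 2) ^ 2 := by positivity
    linarith
  obtain ⟨hlo, hhi⟩ := abs_lt.mp (sq_lt_one_iff_abs_lt_one _ |>.mp hlt)
  refine ((Real.hasDerivAt_arcsin hlo.ne' hhi.ne).comp u
    (((Real.hasDerivAt_cos u).const_mul t).div_const √(1 + t ^ 2))).congr_deriv ?_
  rw [hsq, Real.sqrt_div' _ (sq_nonneg _), Real.sqrt_sq hA.le]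
  field_simp

lemma integral_mul_sin_div_sqrt_one_add_sq_mul_sin_sq (t : ℝ) :
    ∫ u in (0:ℝ)..π / 2, t * Real.sin u / √(1 + t ^ 2 * Real.sin u ^ 2) = Real.arctan t := by
  have cont : Continuous fun u : ℝ => -(t * Real.sin u) / √(1 + t ^ 2 * Real.sin u ^ 2) :=
    (by fun_prop : Continuous _).div (by fun_prop) fun u => (Real.sqrt_pos.mpr (by positivity)).ne'
  have := intervalIntegral.integral_eq_sub_of_hasDerivAt
    (fun u _ => hasDerivAt_arcsin_mul_cos_div t u) (cont.intervalIntegrable 0 (π / 2))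
  simp only [neg_div, intervalIntegral.integral_neg, Real.cos_pi_div_two, Real.cos_zero, mul_zero,
    zero_div, Real.arcsin_zero, mul_one, zero_sub, neg_inj] at this
  rw [this, Real.arctan_eq_arcsin]

lemma integral_arsinh_sin_eq_integral_arctan_div :
    ∫ u in (0:ℝ)..π / 2, Real.arsinh (Real.sin u)
      = ∫ t in (0:ℝ)..1, Real.arctan t / t := by
  have cont : Continuous fun p : ℝ × ℝ => Real.sin p.1 / √(1 + Real.sin p.1 ^ 2 * p.2 ^ 2) :=
    (by fun_prop : Continuous _).div (by fun_prop) fun p => (Real.sqrt_pos.mpr (by positivity)).ne'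
  have fubini := intervalIntegral_intervalIntegral_swap
    (F := fun u t => Real.sin u / √(1 + Real.sin u ^ 2 * t ^ 2))
    (a := 0) (b := π / 2) (c := 0) (d := 1)
    ((cont.continuousOn.integrableOn_compact (isCompact_uIcc.prod isCompact_uIcc)).mono_set
      (prod_mono uIoc_subset_uIcc uIoc_subset_uIcc))
  simp_rw [integral_div_sqrt_one_add_sq_mul_sq] at fubini
  rw [fubini]
  refine intervalIntegral.integral_congr_ae (Filter.Eventually.of_forall fun t ht => ?_)
  rw [uIoc_of_le zero_le_one] at ht
  rw [eq_div_iff ht.1.ne', ← integral_mul_sin_div_sqrt_one_add_sq_mul_sin_sq,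
    ← intervalIntegral.integral_mul_const]
  refine intervalIntegral.integral_congr fun u _ => ?_
  ring_nf

lemma arg_one_sub_I_mul_ofReal (t : ℝ) : Complex.arg (1 - I * t) = -Real.arctan t := by
  have hre : (1 - I * t).re = 1 := by simp
  have him : (1 - I * t).im = -t := by simp
  have hnorm : ‖1 - I * t‖ = √(1 + t ^ 2) := by
    rw [Complex.norm_def, Complex.normSq_apply, hre, him]
    ring_nf
  rw [Complex.arg_of_re_nonneg (by rw [hre]; exact zero_le_one), him, hnorm, neg_div,
    Real.arcsin_neg, Real.arctan_eq_arcsin]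

lemma intervalIntegrable_log_one_sub_mul_div {z : ℂ} (hz : z.re = 0) :
    IntervalIntegrable (fun t : ℝ => Complex.log (1 - z * t) / t) volume 0 1 := by
  set f : ℝ → ℂ := fun t => Complex.log (1 - z * t)
  have hf : Differentiable ℝ f := fun t =>
    (((hasDerivAt_id (t : ℝ)).ofReal_comp.const_mul z).const_sub 1).clog_real
      (by simp [Complex.slitPlane, hz]) |>.differentiableAt
  have hcont : Continuous (dslope f 0) := continuousOn_univ.mp <|
    (continuousOn_dslope Filter.univ_mem).mpr ⟨hf.continuous.continuousOn, hf 0⟩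
  -- away from `0` the integrand is the slope of `f` at `0`
  refine (hcont.intervalIntegrable 0 1).congr fun t ht => ?_
  rw [uIoc_of_le zero_le_one] at ht
  simp [dslope_of_ne f ht.1.ne', slope_def_module, f, div_eq_inv_mul]

lemma BW_I : BW I = ∫ t in (0:ℝ)..1, Real.arctan t / t := by
  have him :=
    Complex.imCLM.intervalIntegral_comp_comm (intervalIntegrable_log_one_sub_mul_div I_re)
  simp only [imCLM_apply] at him
  rw [BW, norm_I, Real.log_one, zero_mul, add_zero, Li2, neg_im, ← him,
    ← intervalIntegral.integral_neg]
  refine intervalIntegral.integral_congr fun t _ => ?_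
  rw [div_ofReal_im, log_im, arg_one_sub_I_mul_ofReal, neg_div, neg_neg]

theorem stmt_13 :
    Real.pi * mahler2 (fun x y => x + y - 4 * x * y + x^2 * y + x * y^2)
      = 4 * BW Complex.I := by
  change π * mahler2 P₄ = _
  rw [pi_mul_mahler2_P₄, integral_abs_arsinh_sin_half, integral_arsinh_sin_eq_integral_arctan_div,
    BW_I]
end

section
/- Let P(x,y) = ax² + bxy + cy² + dx + ey + f be an irreducible degree-two polynomial over ℂ with Δ = b² − 4ac ≠ 0, and let κ satisfy cκ² + bκ + a = 0, κ ≠ 0. Define F(t) = (1/Δ)·(t² + (2cd − be)t + c·(ae² + fb² + cd² − bde − 4acf))/t and G(t) = (1/Δ)·((κt)² + (2ae − bd)(κt) + a·(ae² + fb² + cd² − bde − 4acf))/(κt). Then P(F(t), G(t)) = 0 identically as rational functions of t. -/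
/-!
With `Δ = b² - 4ac ≠ 0` the conic has the centre `(x₀, y₀) = ((2cd - be)/Δ, (2ae - bd)/Δ)`,
where the gradient of `P` vanishes, so `P(x₀ + u, y₀ + v) = Q(u, v) + P(x₀, y₀)` with `Q` the
quadratic part of `P`, and `P(x₀, y₀) = A/Δ`. Now `F = x₀ + (t + cA/t)/Δ` and
`G = y₀ + (κt + aA/(κt))/Δ`; as `(1, κ)` is an isotropic direction of `Q`, the terms in `t²` and
`t⁻²` of `Q(t + cA/t, κt + aA/(κt))` vanish and it equals `-ΔA`, which cancels `P(x₀, y₀)`.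
-/

section Conic

variable {K : Type*} [Field K] (a b c d e f : K)

def conicEval (x y : K) : K := a * x ^ 2 + b * x * y + c * y ^ 2 + d * x + e * y + f

lemma conicEval_add_of_grad_eq_zero {x₀ y₀ : K} (hx : 2 * a * x₀ + b * y₀ + d = 0)
    (hy : b * x₀ + 2 * c * y₀ + e = 0) (u v : K) :
    conicEval a b c d e f (x₀ + u) (y₀ + v) =
      conicEval a b c 0 0 0 u v + conicEval a b c d e f x₀ y₀ := by
  unfold conicEval
  linear_combination u * hx + v * hy

lemma conicEval_div_div (u v r : K) :
    conicEval a b c 0 0 0 (u / r) (v / r) = conicEval a b c 0 0 0 u v / r ^ 2 := by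
  unfold conicEval
  ring

variable {a b c}

lemma grad_eq_zero_at_center (hΔ : discrim a b c ≠ 0) :
    2 * a * ((2 * c * d - b * e) / discrim a b c) + b * ((2 * a * e - b * d) / discrim a b c)
        + d = 0 ∧
      b * ((2 * c * d - b * e) / discrim a b c) + 2 * c * ((2 * a * e - b * d) / discrim a b c)
        + e = 0 := by
  constructor <;> (field_simp; unfold discrim; ring)

lemma conicEval_center (hΔ : discrim a b c ≠ 0) :
    conicEval a b c d e f ((2 * c * d - b * e) / discrim a b c)
        ((2 * a * e - b * d) / discrim a b c) =
      (a * e ^ 2 + f * b ^ 2 + c * d ^ 2 - b * d * e - 4 * a * c * f) / discrim a b c := by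
  unfold conicEval
  field_simp
  unfold discrim
  ring

lemma conicEval_hyperbola {κ s : K} (hκ : c * κ ^ 2 + b * κ + a = 0) (hκ0 : κ ≠ 0)
    (hs : s ≠ 0) (m : K) :
    conicEval a b c 0 0 0 (s + c * m / s) (κ * s + a * m / (κ * s)) = -discrim a b c * m := by
  unfold conicEval discrim
  field_simp
  linear_combination (κ ^ 2 * s ^ 4 + m * b * κ * s ^ 2 + a * c * m ^ 2) * hκ

end Conic

open MvPolynomial

theorem stmt_17_general (a b c d e f κ : ℂ)
    (hΔ : b ^ 2 - 4 * a * c ≠ 0)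
    (hκ : c * κ ^ 2 + b * κ + a = 0) (hκ0 : κ ≠ 0) :
    ∀ t : ℂ, t ≠ 0 →
      let A := a * e ^ 2 + f * b ^ 2 + c * d ^ 2 - b * d * e - 4 * a * c * f
      let F := (1 / (b ^ 2 - 4 * a * c)) * ((t ^ 2 + (2 * c * d - b * e) * t + c * A) / t)
      let G := (1 / (b ^ 2 - 4 * a * c)) *
        (((κ * t) ^ 2 + (2 * a * e - b * d) * (κ * t) + a * A) / (κ * t))
      a * F ^ 2 + b * F * G + c * G ^ 2 + d * F + e * G + f = 0 := by
  intro t ht A F G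
  change discrim a b c ≠ 0 at hΔ
  obtain ⟨hx, hy⟩ := grad_eq_zero_at_center d e hΔ
  have hF : F = (2 * c * d - b * e) / discrim a b c + (t + c * A / t) / discrim a b c := by
    simp only [F, discrim]
    field_simp
    ring
  have hG : G = (2 * a * e - b * d) / discrim a b c
      + (κ * t + a * A / (κ * t)) / discrim a b c := by
    simp only [G, discrim]
    field_simp
    ring
  change conicEval a b c d e f F G = 0
  rw [hF, hG, conicEval_add_of_grad_eq_zero a b c d e f hx hy, conicEval_div_div,
    conicEval_hyperbola hκ hκ0 ht, conicEval_center d e f hΔ]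
  field_simp
  ring

theorem stmt_17 (a b c d e f κ : ℂ)
    (hirr : Irreducible (C a * X 0 ^ 2 + C b * X 0 * X 1 + C c * X 1 ^ 2
      + C d * X 0 + C e * X 1 + C f : MvPolynomial (Fin 2) ℂ))
    (hΔ : b ^ 2 - 4 * a * c ≠ 0)
    (hκ : c * κ ^ 2 + b * κ + a = 0) (hκ0 : κ ≠ 0) :
    ∀ t : ℂ, t ≠ 0 →
      let A := a * e ^ 2 + f * b ^ 2 + c * d ^ 2 - b * d * e - 4 * a * c * f
      let F := (1 / (b ^ 2 - 4 * a * c)) * ((t ^ 2 + (2 * c * d - b * e) * t + c * A) / t)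
      let G := (1 / (b ^ 2 - 4 * a * c)) *
        (((κ * t) ^ 2 + (2 * a * e - b * d) * (κ * t) + a * A) / (κ * t))
      a * F ^ 2 + b * F * G + c * G ^ 2 + d * F + e * G + f = 0 :=
  stmt_17_general a b c d e f κ hΔ hκ hκ0
end

section
/- Let P(x,y) = c'(a'x + b'y)² + dx + ey + f with Δ' = c'(a'e − b'd) ≠ 0, and define F(t) = (1/Δ')(b't² + et + b'c'f) and G(t) = −(1/Δ')(a't² + dt + a'c'f). Then P(F(t), G(t)) = 0 identically as polynomials in t. -/
/-!
With `Δ = c' (a' e - b' d)`, the numerators of `F` and `G` are chosen so that in `a' F + b' G`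
and in `d F + e G` everything except a multiple of `a' e - b' d` cancels:
`a' F + b' G = t / c'` and `d F + e G = -(t² + c' f) / c'`. Hence
`P(F, G) = t² / c' - (t² + c' f) / c' + f = 0`.
-/

section ParabolaParametrization

variable {K : Type*} [Field K] (a b c d e f t : K)

theorem parabola_parametrization_isRoot (hΔ : c * (a * e - b * d) ≠ 0) :
    let F := (1 / (c * (a * e - b * d))) * (b * t ^ 2 + e * t + b * c * f)
    let G := -(1 / (c * (a * e - b * d))) * (a * t ^ 2 + d * t + a * c * f)
    c * (a * F + b * G) ^ 2 + d * F + e * G + f = 0 := by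
  intro F G
  have hc : c ≠ 0 := left_ne_zero_of_mul hΔ
  have hdet : a * e - b * d ≠ 0 := right_ne_zero_of_mul hΔ
  have hquad : a * F + b * G = t / c :=
    calc a * F + b * G = t * (a * e - b * d) / (c * (a * e - b * d)) := by ring
      _ = t / c := mul_div_mul_right _ _ hdet
  have hlin : d * F + e * G = -(t ^ 2 + c * f) / c :=
    calc d * F + e * G = -(t ^ 2 + c * f) * (a * e - b * d) / (c * (a * e - b * d)) := by ring
      _ = -(t ^ 2 + c * f) / c := mul_div_mul_right _ _ hdet
  rw [add_assoc (c * _), hlin, hquad]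
  field_simp
  ring

end ParabolaParametrization

theorem stmt_18_general (a' b' c' d e f : ℂ)
    (hΔ' : c' * (a' * e - b' * d) ≠ 0) :
    ∀ t : ℂ,
      let F := (1 / (c' * (a' * e - b' * d))) * (b' * t ^ 2 + e * t + b' * c' * f)
      let G := -(1 / (c' * (a' * e - b' * d))) * (a' * t ^ 2 + d * t + a' * c' * f)
      c' * (a' * F + b' * G) ^ 2 + d * F + e * G + f = 0 :=
  fun t => parabola_parametrization_isRoot a' b' c' d e f t hΔ'

theorem stmt_18 (a' b' c' d e f : ℂ) (hc' : c' ≠ 0)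
    (hΔ' : c' * (a' * e - b' * d) ≠ 0) :
    ∀ t : ℂ,
      let F := (1 / (c' * (a' * e - b' * d))) * (b' * t ^ 2 + e * t + b' * c' * f)
      let G := -(1 / (c' * (a' * e - b' * d))) * (a' * t ^ 2 + d * t + a' * c' * f)
      c' * (a' * F + b' * G) ^ 2 + d * F + e * G + f = 0 :=
  stmt_18_general a' b' c' d e f hΔ'
end
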